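/- Let p be an odd prime and let d ≥ 1 be an integer with p ∤ d. Let a and b be integers, each of which is either of the form 1 + 4γd for some integer γ with p ∤ (1 + 4γd), or of the form p² + 4γd for some integer γ with p ∤ γ. Then there exists an integer x with gcd(x, 2dp) = 1 such that 4dp² divides a − x²·b, if and only if a·b is a quadratic residue modulo p (i.e., there exists y with p ∣ ab − y²). -/

import Mathlib

/-!
Modulo `4d` both `a` and `b` are squares of units (`1` or `p`), so `a ≡ x² b` is solvable there
with no condition. Modulo `p²` the congruence is solvable exactly when `ab` is a square mod `p²`,
and since `p` is odd and `p ∤ ab`, a square root of `ab` mod `p` lifts to one mod `p²` by one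
Newton step. The Chinese remainder theorem glues the two solutions.
-/

section CommRing

variable {R : Type*} [CommRing R]

theorem IsCoprime.of_dvd_sub {m x y : R} (hy : IsCoprime y m) (h : m ∣ x - y) :
    IsCoprime x m := by
  obtain ⟨k, hk⟩ := h
  rw [sub_eq_iff_eq_add'] at hk
  exact hk ▸ IsCoprime.add_mul_left_left_iff.2 hy

theorem IsCoprime.exists_dvd_sub_and_dvd_sub {m n : R} (h : IsCoprime m n) (x₁ x₂ : R) :
    ∃ x, m ∣ x - x₁ ∧ n ∣ x - x₂ := by
  obtain ⟨u, v, huv⟩ := h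
  exact ⟨v * n * x₁ + u * m * x₂, ⟨u * (x₂ - x₁), by linear_combination x₁ * huv⟩,
    ⟨v * (x₁ - x₂), by linear_combination x₂ * huv⟩⟩

theorem IsCoprime.exists_dvd_sub_and_sq_dvd_sub_sq {m y c : R} (h : IsCoprime (2 * y) m)
    (hy : m ∣ c - y ^ 2) : ∃ z, m ∣ z - y ∧ m ^ 2 ∣ c - z ^ 2 := by
  obtain ⟨k, hk⟩ := hy
  obtain ⟨u, v, huv⟩ := h
  exact ⟨y + u * k * m, ⟨u * k, by ring⟩,
    ⟨k * v - u ^ 2 * k ^ 2, by linear_combination hk - k * m * huv⟩⟩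

theorem dvd_sub_sq_mul_of_dvd_sub {m a b x y : R} (hxy : m ∣ x - y) (h : m ∣ a - y ^ 2 * b) :
    m ∣ a - x ^ 2 * b := by
  convert dvd_sub h ((hxy.mul_right (x + y)).mul_right b) using 1
  ring

theorem exists_isCoprime_dvd_sub_sq_mul {m a b z : R} (hb : IsCoprime b m)
    (hz : IsCoprime z m) (h : m ∣ a * b - z ^ 2) :
    ∃ x, IsCoprime x m ∧ m ∣ a - x ^ 2 * b := by
  obtain ⟨c, v, hcv⟩ := hb
  obtain ⟨k, hk⟩ := h
  exact ⟨z * c, hz.mul_left ⟨b, v, by linear_combination hcv⟩,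
    ⟨c * k + c * z ^ 2 * v + a * v, by linear_combination c * hk - (a + c * z ^ 2) * hcv⟩⟩

theorem exists_isCoprime_dvd_sub_sq_mul_of_dvd_sub_sq {m a b s t : R} (hs : IsCoprime s m)
    (ht : IsCoprime t m) (ha : m ∣ a - s ^ 2) (hb : m ∣ b - t ^ 2) :
    ∃ x, IsCoprime x m ∧ m ∣ a - x ^ 2 * b := by
  refine exists_isCoprime_dvd_sub_sq_mul (ht.pow_left.of_dvd_sub hb) (hs.mul_left ht) ?_
  convert dvd_add (ha.mul_right b) (hb.mul_left (s ^ 2)) using 1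
  ring

theorem exists_isCoprime_sq_dvd_sub_sq_mul {p a b y : R} (h2 : IsCoprime 2 p)
    (ha : IsCoprime a p) (hb : IsCoprime b p) (hy : p ∣ a * b - y ^ 2) :
    ∃ x, IsCoprime x (p ^ 2) ∧ p ^ 2 ∣ a - x ^ 2 * b := by
  have hyp : IsCoprime y p :=
    (IsCoprime.pow_left_iff two_pos).1 ((ha.mul_left hb).of_dvd_sub (dvd_sub_comm.1 hy))
  obtain ⟨z, hzy, hz⟩ := (h2.mul_left hyp).exists_dvd_sub_and_sq_dvd_sub_sq hy
  exact exists_isCoprime_dvd_sub_sq_mul hb.pow_right (hyp.of_dvd_sub hzy).pow_right hz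

theorem IsCoprime.exists_isCoprime_mul_dvd_sub_sq_mul {m n a b x₁ x₂ : R} (hmn : IsCoprime m n)
    (hx₁ : IsCoprime x₁ m) (h₁ : m ∣ a - x₁ ^ 2 * b) (hx₂ : IsCoprime x₂ n)
    (h₂ : n ∣ a - x₂ ^ 2 * b) : ∃ x, IsCoprime x (m * n) ∧ m * n ∣ a - x ^ 2 * b := by
  obtain ⟨x, hm, hn⟩ := hmn.exists_dvd_sub_and_dvd_sub x₁ x₂
  exact ⟨x, (hx₁.of_dvd_sub hm).mul_right (hx₂.of_dvd_sub hn),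
    hmn.mul_dvd (dvd_sub_sq_mul_of_dvd_sub hm h₁) (dvd_sub_sq_mul_of_dvd_sub hn h₂)⟩

end CommRing

/-- The values `-2dp² q(v)` of a generator `v` of `Γ_⟨α⟩`: the first form when `i_α = 1`,
the second when `i_α = 0`. -/
def IsGeneratorValue (p d a : ℤ) : Prop :=
  (∃ γ : ℤ, a = 1 + 4 * γ * d ∧ ¬ p ∣ 1 + 4 * γ * d) ∨
    (∃ γ : ℤ, a = p ^ 2 + 4 * γ * d ∧ ¬ p ∣ γ)

namespace IsGeneratorValue

variable {p d a : ℤ}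

theorem not_dvd (h : IsGeneratorValue p d a) (hp : IsCoprime p (4 * d)) : ¬ p ∣ a := by
  rcases h with ⟨γ, rfl, hγ⟩ | ⟨γ, rfl, hγ⟩
  · exact hγ
  · refine fun hpa => hγ (hp.dvd_of_dvd_mul_left ?_)
    convert dvd_sub hpa (dvd_pow_self p two_ne_zero) using 1
    ring

theorem exists_isCoprime_dvd_sub_sq (h : IsGeneratorValue p d a) (hp : IsCoprime p (4 * d)) :
    ∃ s, IsCoprime s (4 * d) ∧ 4 * d ∣ a - s ^ 2 := by
  rcases h with ⟨γ, rfl, -⟩ | ⟨γ, rfl, -⟩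
  · exact ⟨1, isCoprime_one_left, γ, by ring⟩
  · exact ⟨p, hp, γ, by ring⟩

end IsGeneratorValue

theorem congruence_iff_QR_p_not_dvd_d_general (p : ℕ) (hp : p.Prime) (hodd : Odd p)
    (d : ℕ) (hpd : ¬ p ∣ d) (a b : ℤ)
    (ha : (∃ γ : ℤ, a = 1 + 4 * γ * (d : ℤ) ∧ ¬ ((p : ℤ) ∣ (1 + 4 * γ * (d : ℤ)))) ∨
          (∃ γ : ℤ, a = (p : ℤ) ^ 2 + 4 * γ * (d : ℤ) ∧ ¬ ((p : ℤ) ∣ γ)))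
    (hb : (∃ γ : ℤ, b = 1 + 4 * γ * (d : ℤ) ∧ ¬ ((p : ℤ) ∣ (1 + 4 * γ * (d : ℤ)))) ∨
          (∃ γ : ℤ, b = (p : ℤ) ^ 2 + 4 * γ * (d : ℤ) ∧ ¬ ((p : ℤ) ∣ γ))) :
    (∃ x : ℤ, Int.gcd x (2 * (d : ℤ) * (p : ℤ)) = 1 ∧
        (4 * (d : ℤ) * (p : ℤ) ^ 2) ∣ (a - x ^ 2 * b)) ↔
      (∃ y : ℤ, (p : ℤ) ∣ (a * b - y ^ 2)) := by
  have hp4d : IsCoprime (p : ℤ) (4 * d) := by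
    simpa using ((hodd.coprime_two_right.pow_right 2).mul_right
      (hp.coprime_iff_not_dvd.2 hpd)).isCoprime
  have hpZ : Prime (p : ℤ) := Nat.prime_iff_prime_int.mp hp
  have hap : IsCoprime a p := (hpZ.coprime_iff_not_dvd.2 (IsGeneratorValue.not_dvd ha hp4d)).symm
  have hbp : IsCoprime b p := (hpZ.coprime_iff_not_dvd.2 (IsGeneratorValue.not_dvd hb hp4d)).symm
  constructor
  · rintro ⟨x, -, hx⟩
    refine ⟨x * b, ?_⟩
    have hpx : (p : ℤ) ∣ a - x ^ 2 * b := ((dvd_pow_self _ two_ne_zero).mul_left _).trans hx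
    rw [show a * b - (x * b) ^ 2 = (a - x ^ 2 * b) * b by ring]
    exact hpx.mul_right b
  · rintro ⟨y, hy⟩
    obtain ⟨s, hs, has⟩ := IsGeneratorValue.exists_isCoprime_dvd_sub_sq ha hp4d
    obtain ⟨t, ht, hbt⟩ := IsGeneratorValue.exists_isCoprime_dvd_sub_sq hb hp4d
    obtain ⟨x₁, hx₁, h₁⟩ := exists_isCoprime_dvd_sub_sq_mul_of_dvd_sub_sq hs ht has hbt
    have h2p : IsCoprime 2 (p : ℤ) := (hp4d.of_isCoprime_of_dvd_right ⟨2 * d, by ring⟩).symm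
    obtain ⟨x₂, hx₂, h₂⟩ := exists_isCoprime_sq_dvd_sub_sq_mul h2p hap hbp hy
    obtain ⟨x, hx, h⟩ :=
      hp4d.symm.pow_right.exists_isCoprime_mul_dvd_sub_sq_mul hx₁ h₁ hx₂ h₂
    have hx' : IsCoprime x (2 * d * p) := hx.of_isCoprime_of_dvd_right ⟨2 * p, by ring⟩
    exact ⟨x, Int.isCoprime_iff_gcd_eq_one.1 hx', h⟩

/-- Let `p` be an odd prime and `d ≥ 1` with `p ∤ d`.  Let `a` and `b`
each be of the form `1 + 4γd` with `p ∤ (1 + 4γd)`, or of the form `p² + 4γd` with `p ∤ γ`.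
Then `a ≡ x² b (mod 4dp²)` is solvable with `gcd(x, 2dp) = 1` if and only if `ab` is a
quadratic residue modulo `p`. -/
theorem congruence_iff_QR_p_not_dvd_d (p : ℕ) (hp : p.Prime) (hodd : Odd p)
    (d : ℕ) (hd : 1 ≤ d) (hpd : ¬ p ∣ d) (a b : ℤ)
    (ha : (∃ γ : ℤ, a = 1 + 4 * γ * (d : ℤ) ∧ ¬ ((p : ℤ) ∣ (1 + 4 * γ * (d : ℤ)))) ∨
          (∃ γ : ℤ, a = (p : ℤ) ^ 2 + 4 * γ * (d : ℤ) ∧ ¬ ((p : ℤ) ∣ γ)))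
    (hb : (∃ γ : ℤ, b = 1 + 4 * γ * (d : ℤ) ∧ ¬ ((p : ℤ) ∣ (1 + 4 * γ * (d : ℤ)))) ∨
          (∃ γ : ℤ, b = (p : ℤ) ^ 2 + 4 * γ * (d : ℤ) ∧ ¬ ((p : ℤ) ∣ γ))) :
    (∃ x : ℤ, Int.gcd x (2 * (d : ℤ) * (p : ℤ)) = 1 ∧
        (4 * (d : ℤ) * (p : ℤ) ^ 2) ∣ (a - x ^ 2 * b)) ↔
      (∃ y : ℤ, (p : ℤ) ∣ (a * b - y ^ 2)) :=
  congruence_iff_QR_p_not_dvd_d_general p hp hodd d hpd a b ha hb
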